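/- Let n = q^t, 1 ≤ s < t, and k ≤ n − q^s, and let g_1,…,g_t be chosen according to Construction III. Then: (i) for any two polynomials f, f' ∈ F[x] of degree at most k−1 satisfying Tr(g_i(α)·f(α)) = Tr(g_i(α)·f'(α)) for every α ∈ F∖{α*} and every i ∈ {1,…,t}, one has f(α*) = f'(α*) — so the g_i can be used to repair the codeword symbol f(α*) of the full-length Reed–Solomon code RS(F,k); and (ii) Σ_{α ∈ F∖{α*}} rank_q{g_1(α),…,g_t(α)} ≤ (n−1)(t−s), i.e., the repair bandwidth is at most (n−1)(t−s)·log₂q bits. -/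

import Mathlib

/-!
The subspace polynomial `L_W(z) = ∏_{w ∈ W} (z - w)` is `B`-linear on `F` and kills `W`, so
`gᵢ(α) = L_W(uᵢ (α - α*)) / (α - α*)` lies in `(α - α*)⁻¹ · L_W(F)`, a space of dimension at
most `t - s`; this gives the bandwidth bound.

For the repair property, `gᵢ` has degree `q^s - 1`, so for `h = f - f'` of degree
`< k ≤ q^t - q^s` the polynomial `gᵢ h` has degree `< q^t - 1` and its values sum to zero over
`F`. Hence `Tr(gᵢ(α*) h(α*))` is minus the sum of the other traces, which vanish. Since
`gᵢ(α*) = uᵢ · ∏_{0 ≠ w ∈ W} (-w)` runs through a rescaled basis, nondegeneracy of the trace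
form forces `h(α*) = 0`.
-/

open Polynomial
open scoped Classical
open Finset

theorem FiniteField.sum_eval_eq_zero {K : Type*} [Field K] [Fintype K] {p : K[X]} (hp : p.natDegree < Fintype.card K - 1) :
    ∑ x : K, p.eval x = 0 := by
  simp_rw [eval_eq_sum_range, Finset.sum_comm (γ := K), ← Finset.mul_sum]
  refine Finset.sum_eq_zero fun j hj => ?_
  rw [FiniteField.sum_pow_lt_card_sub_one (K := K) j (by rw [Finset.mem_range] at hj; omega),
    mul_zero]

section Trace

variable {B F : Type*} [Field B] [Field F] [Fintype F] [Algebra B F]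

theorem trace_eval_eq_zero_of_forall_ne {p : F[X]} (hp : p.natDegree < Fintype.card F - 1)
    {x₀ : F} (h : ∀ x, x ≠ x₀ → Algebra.trace B F (p.eval x) = 0) :
    Algebra.trace B F (p.eval x₀) = 0 := by
  have hsum : p.eval x₀ = -∑ x ∈ univ.erase x₀, p.eval x := by
    rw [eq_neg_iff_add_eq_zero, add_comm, sum_erase_add _ _ (mem_univ x₀)]
    exact FiniteField.sum_eval_eq_zero hp
  rw [hsum, map_neg, map_sum, sum_eq_zero fun x hx => h x (ne_of_mem_erase hx), neg_zero]

theorem eq_zero_of_forall_trace_mul_basis_eq_zero {ι : Type*} (u : Module.Basis ι B F) {y : F}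
    (h : ∀ i, Algebra.trace B F (y * u i) = 0) : y = 0 := by
  have : Algebra.traceForm B F y = 0 := u.ext fun i => by simpa using h i
  exact (traceForm_nondegenerate B F).1 y fun z => by simp [this]

end Trace

section SubspacePoly

variable {B F : Type*} [Field B] [Field F] [Fintype F] [Algebra B F]
  (W : Submodule B F)

theorem card_filter_mem_submodule [Fintype B] :
    #{w | w ∈ W} = Fintype.card B ^ Module.finrank B W := by
  rw [← Module.card_eq_pow_finrank, Fintype.card_subtype]

theorem zero_mem_filter_mem_submodule : (0 : F) ∈ ({w | w ∈ W} : Finset F) := by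
  simp

noncomputable def subspacePoly : F[X] :=
  ∏ w with w ∈ W, (X - C w)

theorem eval_subspacePoly (z : F) : (subspacePoly W).eval z = ∏ w with w ∈ W, (z - w) := by
  simp [subspacePoly, eval_prod]

theorem subspacePoly_monic : (subspacePoly W).Monic :=
  monic_prod_of_monic _ _ fun w _ => monic_X_sub_C w

theorem natDegree_subspacePoly : (subspacePoly W).natDegree = #{w | w ∈ W} := by
  rw [subspacePoly, natDegree_prod_of_monic _ _ fun w _ => monic_X_sub_C w]
  simp

theorem eval_subspacePoly_of_mem {w : F} (hw : w ∈ W) : (subspacePoly W).eval w = 0 := by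
  rw [eval_subspacePoly]
  exact prod_eq_zero (by simpa using hw) (sub_self w)

theorem eval_subspacePoly_add_of_mem (z : F) {w : F} (hw : w ∈ W) :
    (subspacePoly W).eval (z + w) = (subspacePoly W).eval z := by
  simp only [eval_subspacePoly]
  refine prod_nbij' (· - w) (· + w) ?_ ?_ ?_ ?_ ?_ <;> intro v hv
  · simpa using W.sub_mem (by simpa using hv) hw
  · simpa using W.add_mem (by simpa using hv) hw
  · exact sub_add_cancel v w
  · exact add_sub_cancel_right v w
  · ring

theorem eval_subspacePoly_add (y z : F) :
    (subspacePoly W).eval (y + z) = (subspacePoly W).eval y + (subspacePoly W).eval z := by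
  set L := subspacePoly W
  have hpos : 0 < L.degree := by
    rw [degree_eq_natDegree (subspacePoly_monic W).ne_zero, natDegree_subspacePoly]
    exact_mod_cast card_pos.2 ⟨0, zero_mem_filter_mem_submodule W⟩
  -- `taylor y L - L` has degree `< #W` since `L` is monic, and by shift invariance it equals
  -- `L(y)` on `W`, so it is the constant `L(y)`.
  have hdeg : (taylor y L - C (L.eval y) - L).degree < #{w | w ∈ W} := by
    rw [sub_right_comm, ← natDegree_subspacePoly W,
      ← degree_eq_natDegree (subspacePoly_monic W).ne_zero]
    refine (degree_sub_le _ _).trans_lt (max_lt ?_ (degree_C_le.trans_lt hpos))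
    simpa [degree_taylor] using degree_sub_lt_left (degree_taylor L y)
      (by simpa [← degree_eq_bot, degree_taylor] using hpos.ne_bot) (leadingCoeff_taylor y L)
  have hshift := Polynomial.eq_of_degree_sub_lt_of_eval_finset_eq _ hdeg fun w hw => by
    rw [mem_filter] at hw
    rw [eval_sub, taylor_eval, eval_C, add_comm, eval_subspacePoly_add_of_mem W y hw.2,
      eval_subspacePoly_of_mem W hw.2, sub_self]
  have := congrArg (eval z) hshift
  rw [eval_sub, taylor_eval, eval_C, sub_eq_iff_eq_add] at this
  rw [add_comm y, this, add_comm]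

theorem eval_subspacePoly_smul [Fintype B] (c : B) (z : F) :
    (subspacePoly W).eval (c • z) = c • (subspacePoly W).eval z := by
  rcases eq_or_ne c 0 with rfl | hc
  · simp [eval_subspacePoly_of_mem W W.zero_mem]
  simp only [eval_subspacePoly]
  have hperm : ∏ w with w ∈ W, (c • z - w) = ∏ w with w ∈ W, (c • z - c • w) := by
    refine prod_nbij' (c⁻¹ • ·) (c • ·) ?_ ?_ ?_ ?_ ?_ <;> intro v hv
    · simpa using W.smul_mem c⁻¹ (by simpa using hv)
    · simpa using W.smul_mem c (by simpa using hv)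
    · exact smul_inv_smul₀ hc v
    · exact inv_smul_smul₀ hc v
    · rw [smul_inv_smul₀ hc v]
  have hpow : algebraMap B F c ^ #{w | w ∈ W} = algebraMap B F c := by
    rw [card_filter_mem_submodule, ← map_pow, FiniteField.pow_card_pow]
  rw [hperm]
  simp_rw [← smul_sub, Algebra.smul_def]
  rw [prod_mul_distrib, prod_const, hpow]

noncomputable def subspacePolyMap [Fintype B] : F →ₗ[B] F where
  toFun z := (subspacePoly W).eval z
  map_add' := eval_subspacePoly_add W
  map_smul' := eval_subspacePoly_smul W

theorem subspacePolyMap_apply [Fintype B] (z : F) :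
    subspacePolyMap W z = (subspacePoly W).eval z := rfl

theorem finrank_range_subspacePolyMap_add_finrank_le [Fintype B] :
    Module.finrank B (LinearMap.range (subspacePolyMap W)) + Module.finrank B W
      ≤ Module.finrank B F := by
  have hker : W ≤ LinearMap.ker (subspacePolyMap W) := fun w hw => eval_subspacePoly_of_mem W hw
  have := (subspacePolyMap W).finrank_range_add_finrank_ker
  have := Submodule.finrank_mono hker
  omega

end SubspacePoly

section RepairPoly

variable {B F : Type*} [Field B] [Field F] [Fintype F] [Algebra B F] (W : Submodule B F)

noncomputable def repairPoly (x₀ a : F) : F[X] :=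
  (∏ w with w ∈ W, (C a * (X - C x₀) - C w)) /ₘ (X - C x₀)

theorem repairPoly_eq (x₀ a : F) :
    repairPoly W x₀ a =
      C a * ∏ w ∈ ({w | w ∈ W} : Finset F).erase 0, (C a * (X - C x₀) - C w) := by
  rw [repairPoly, ← mul_prod_erase _ _ (zero_mem_filter_mem_submodule W), C_0, sub_zero,
    mul_comm (C a), mul_assoc, mul_divByMonic_cancel_left _ (monic_X_sub_C x₀)]

theorem natDegree_repairPoly_lt (x₀ a : F) :
    (repairPoly W x₀ a).natDegree < #{w | w ∈ W} := by
  have hlin : ∀ w : F, (C a * (X - C x₀) - C w).natDegree ≤ 1 := fun w => by compute_degree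
  calc (repairPoly W x₀ a).natDegree
      ≤ ∑ w ∈ ({w | w ∈ W} : Finset F).erase 0, (C a * (X - C x₀) - C w).natDegree := by
        rw [repairPoly_eq]
        exact natDegree_C_mul_le _ _ |>.trans (natDegree_prod_le _ _)
    _ ≤ #(({w | w ∈ W} : Finset F).erase 0) :=
        (sum_le_card_nsmul _ _ 1 fun w _ => hlin w).trans_eq (by rw [smul_eq_mul, mul_one])
    _ < #{w | w ∈ W} := card_erase_lt_of_mem (zero_mem_filter_mem_submodule W)

theorem eval_repairPoly_self (x₀ a : F) :
    (repairPoly W x₀ a).eval x₀ = a * ∏ w ∈ ({w | w ∈ W} : Finset F).erase 0, -w := by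
  simp [repairPoly_eq, eval_prod]

theorem prod_erase_zero_neg_ne_zero : ∏ w ∈ ({w | w ∈ W} : Finset F).erase 0, -w ≠ 0 :=
  prod_ne_zero_iff.2 fun _ hw => neg_ne_zero.2 (ne_of_mem_erase hw)

theorem sub_mul_eval_repairPoly (x₀ a x : F) :
    (x - x₀) * (repairPoly W x₀ a).eval x = (subspacePoly W).eval (a * (x - x₀)) := by
  rw [repairPoly_eq, eval_subspacePoly, ← mul_prod_erase _ _ (zero_mem_filter_mem_submodule W)]
  simp only [eval_mul, eval_C, eval_prod, eval_sub, eval_X, sub_zero]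
  ring

theorem finrank_span_eval_repairPoly_add_finrank_le [Fintype B] {ι : Type*} (a : ι → F)
    {x₀ x : F} (hx : x ≠ x₀) :
    Module.finrank B (Submodule.span B (Set.range fun i => (repairPoly W x₀ (a i)).eval x))
      + Module.finrank B W ≤ Module.finrank B F := by
  have hspan : Submodule.span B (Set.range fun i => (repairPoly W x₀ (a i)).eval x)
      ≤ (LinearMap.range (subspacePolyMap W)).map (LinearMap.mulLeft B (x - x₀)⁻¹) := by
    refine Submodule.span_le.2 ?_
    rintro _ ⟨i, rfl⟩
    refine ⟨_, LinearMap.mem_range_self _ (a i * (x - x₀)), ?_⟩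
    rw [LinearMap.mulLeft_apply, subspacePolyMap_apply, ← sub_mul_eval_repairPoly,
      inv_mul_cancel_left₀ (sub_ne_zero.2 hx)]
  have := (Submodule.finrank_mono hspan).trans (Submodule.finrank_map_le _ _)
  have := finrank_range_subspacePolyMap_add_finrank_le W
  omega

theorem eval_eq_zero_of_trace_mul_eval_repairPoly_eq_zero {ι : Type*} (u : Module.Basis ι B F)
    {x₀ : F} {h : F[X]} (hdeg : h.degree < ↑(Fintype.card F - #{w | w ∈ W}))
    (htr : ∀ x, x ≠ x₀ → ∀ i,
      Algebra.trace B F ((repairPoly W x₀ (u i)).eval x * h.eval x) = 0) :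
    h.eval x₀ = 0 := by
  rcases eq_or_ne h 0 with rfl | hh
  · exact eval_zero
  have hnat := (natDegree_lt_iff_degree_lt hh).2 hdeg
  have key : ∀ i, Algebra.trace B F
      ((∏ w ∈ ({w | w ∈ W} : Finset F).erase 0, -w) * h.eval x₀ * u i) = 0 := by
    intro i
    have hlow : (repairPoly W x₀ (u i) * h).natDegree < Fintype.card F - 1 := by
      have := natDegree_repairPoly_lt W x₀ (u i)
      exact natDegree_mul_le.trans_lt (by omega)
    have := trace_eval_eq_zero_of_forall_ne hlow fun x hx => by simpa using htr x hx i
    rw [eval_mul, eval_repairPoly_self] at this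
    convert this using 2
    ring
  exact (mul_eq_zero.1 (eq_zero_of_forall_trace_mul_basis_eq_zero u key)).resolve_left
    (prod_erase_zero_neg_ne_zero W)

end RepairPoly

theorem constructionIII_repair_general
    (q t s k n : ℕ) (B F : Type*) [Field B] [Fintype B] [Field F] [Fintype F]
    [Algebra B F]
    (hq : Fintype.card B = q) (ht : Module.finrank B F = t)
    (hn : n = q ^ t) (hk : k ≤ n - q ^ s)
    (αstar : F) (u : Module.Basis (Fin t) B F)
    (W : Submodule B F) (hW : Module.finrank B W = s)
    (g : Fin t → F[X])
    (hg : ∀ i, g i =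
      (∏ w ∈ Finset.univ.filter (fun w : F => w ∈ W),
        (C (u i) * (X - C αstar) - C w)) /ₘ (X - C αstar)) :
    (∀ f f' : F[X], f.degree < (k : WithBot ℕ) → f'.degree < (k : WithBot ℕ) →
      (∀ α : F, α ≠ αstar → ∀ i : Fin t,
        Algebra.trace B F ((g i).eval α * f.eval α)
          = Algebra.trace B F ((g i).eval α * f'.eval α)) →
      f.eval αstar = f'.eval αstar) ∧
    ∑ α ∈ Finset.univ.erase αstar,
        Module.finrank B (Submodule.span B (Set.range fun i => (g i).eval α))
      ≤ (n - 1) * (t - s) := by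
  obtain rfl : g = fun i => repairPoly W αstar (u i) := funext hg
  beta_reduce
  have hcardF : Fintype.card F = n := by
    rw [hn, ← hq, ← ht, Module.card_eq_pow_finrank (K := B)]
  refine ⟨fun f f' hf hf' htr => ?_, ?_⟩
  · rw [← sub_eq_zero, ← eval_sub]
    refine eval_eq_zero_of_trace_mul_eval_repairPoly_eq_zero W u ?_ fun x hx i => ?_
    · rw [card_filter_mem_submodule, hq, hW, hcardF]
      exact ((degree_sub_le f f').trans_lt (max_lt hf hf')).trans_le (by exact_mod_cast hk)
    · rw [eval_sub, mul_sub, map_sub, htr x hx i, sub_self]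
  · calc _ ≤ ∑ _x ∈ Finset.univ.erase αstar, (t - s) := sum_le_sum fun x hx => by
          have := finrank_span_eval_repairPoly_add_finrank_le W u (ne_of_mem_erase hx)
          omega
      _ = (n - 1) * (t - s) := by
          rw [sum_const, card_erase_of_mem (mem_univ _), card_univ, hcardF, smul_eq_mul]

/-- Theorem 5. Let `n = q^t`, `1 ≤ s < t`, `k ≤ n - q^s`, and let
`g₁, …, g_t` be chosen according to Construction III. Then (i) the traces
`Tr(gᵢ(α) f(α))`, `α ∈ F \ {α*}`, `i ∈ [t]`, determine the codeword symbol `f(α*)` of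
the full-length Reed–Solomon code `RS(F, k)`, and (ii) the repair bandwidth is at most
`(n-1)(t-s)` sub-symbols:
`Σ_{α ∈ F \ {α*}} rank_q {g₁(α), …, g_t(α)} ≤ (n-1)(t-s)`. -/
theorem constructionIII_repair
    (q t s k n : ℕ) (B F : Type*) [Field B] [Fintype B] [Field F] [Fintype F]
    [Algebra B F]
    (hq : Fintype.card B = q) (ht : Module.finrank B F = t)
    (hs1 : 1 ≤ s) (hst : s < t)
    (hn : n = q ^ t) (hk : k ≤ n - q ^ s)
    (αstar : F) (u : Module.Basis (Fin t) B F)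
    (W : Submodule B F) (hW : Module.finrank B W = s)
    (g : Fin t → F[X])
    (hg : ∀ i, g i =
      (∏ w ∈ Finset.univ.filter (fun w : F => w ∈ W),
        (C (u i) * (X - C αstar) - C w)) /ₘ (X - C αstar)) :
    (∀ f f' : F[X], f.degree < (k : WithBot ℕ) → f'.degree < (k : WithBot ℕ) →
      (∀ α : F, α ≠ αstar → ∀ i : Fin t,
        Algebra.trace B F ((g i).eval α * f.eval α)
          = Algebra.trace B F ((g i).eval α * f'.eval α)) →
      f.eval αstar = f'.eval αstar) ∧
    ∑ α ∈ Finset.univ.erase αstar,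
        Module.finrank B (Submodule.span B (Set.range fun i => (g i).eval α))
      ≤ (n - 1) * (t - s) :=
  constructionIII_repair_general q t s k n B F hq ht hn hk αstar u W hW g hg
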